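/- If σ is a density matrix and A is an operator with 0 ≤ A ≤ 1 such that Tr(Aσ) = 1, then √A σ √A = σ. -/

import Mathlib

/-!
Both `1 - A` and `σ` are positive, so `Tr((1 - A) σ) = Tr σ - Tr(A σ) = 0` forces `(1 - A) σ = 0`,
i.e. `A σ = σ`. Then `(1 + √A)(1 - √A) σ = (1 - A) σ = 0`, and `1 + √A` is invertible, so
`√A σ = σ`; taking adjoints, `σ √A = σ` as well.
-/

open Matrix ComplexOrder

noncomputable def Matrix.PosSemidef.sqrt {n : Type*} [Fintype n] [DecidableEq n]
    {𝕜 : Type*} [RCLike 𝕜] {A : Matrix n n 𝕜} (hA : A.PosSemidef) : Matrix n n 𝕜 :=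
  hA.1.eigenvectorUnitary.1 * diagonal ((↑) ∘ (√·) ∘ hA.1.eigenvalues) *
  (star hA.1.eigenvectorUnitary : Matrix n n 𝕜)

theorem mul_eq_self_of_mul_mul_eq_self {R : Type*} [Ring R] {s x : R} (hs : IsUnit (1 + s))
    (h : s * s * x = x) : s * x = x := by
  have : (1 + s) * ((1 - s) * x) = 0 :=
    calc (1 + s) * ((1 - s) * x) = x - s * s * x := by noncomm_ring
      _ = 0 := by rw [h, sub_self]
  rw [hs.mul_right_eq_zero, sub_mul, one_mul, sub_eq_zero] at this
  exact this.symm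

namespace Matrix.PosSemidef

open scoped MatrixOrder

variable {n 𝕜 : Type*} [Fintype n] [RCLike 𝕜]

theorem mul_eq_zero_of_trace_mul_eq_zero {P Q : Matrix n n 𝕜} (hP : P.PosSemidef)
    (hQ : Q.PosSemidef) (h : (P * Q).trace = 0) : P * Q = 0 := by
  classical
  obtain ⟨B, rfl⟩ := CStarAlgebra.nonneg_iff_eq_star_mul_self.mp hP.nonneg
  obtain ⟨C, rfl⟩ := CStarAlgebra.nonneg_iff_eq_star_mul_self.mp hQ.nonneg
  -- `Tr(B⋆B C⋆C)` is the squared Frobenius norm of `C B⋆`.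
  have hCB : C * star B = 0 := by
    rw [← trace_conjTranspose_mul_self_eq_zero_iff, ← h, ← star_eq_conjTranspose,
      Matrix.mul_assoc (star B), trace_mul_comm (star B)]
    simp only [star_mul, star_star, Matrix.mul_assoc]
  calc star B * B * (star C * C) = star B * star (C * star B) * C := by
        simp only [star_mul, star_star, Matrix.mul_assoc]
    _ = 0 := by rw [hCB, star_zero, Matrix.mul_zero, Matrix.zero_mul]

variable [DecidableEq n]

theorem sqrt_eq_cfcSqrt {A : Matrix n n 𝕜} (hA : A.PosSemidef) : hA.sqrt = CFC.sqrt A := by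
  rw [CFC.sqrt_eq_cfc, cfc_nnreal_eq_real _ A, hA.1.cfc_eq, IsHermitian.cfc,
    Unitary.conjStarAlgAut_apply]
  unfold Matrix.PosSemidef.sqrt
  congr 3
  funext i
  simp [hA.eigenvalues_nonneg i]

theorem posSemidef_sqrt {A : Matrix n n 𝕜} (hA : A.PosSemidef) : hA.sqrt.PosSemidef :=
  hA.sqrt_eq_cfcSqrt ▸ (CFC.sqrt_nonneg A).posSemidef

theorem sqrt_mul_self {A : Matrix n n 𝕜} (hA : A.PosSemidef) : hA.sqrt * hA.sqrt = A :=
  hA.sqrt_eq_cfcSqrt ▸ CFC.sqrt_mul_sqrt_self A hA.nonneg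

theorem sqrt_mul_eq_self_of_mul_eq_self {A X : Matrix n n 𝕜} (hA : A.PosSemidef)
    (h : A * X = X) : hA.sqrt * X = X :=
  have hunit : IsUnit (1 + hA.sqrt) := (PosDef.one.add_posSemidef hA.posSemidef_sqrt).isUnit
  mul_eq_self_of_mul_mul_eq_self hunit (by rwa [hA.sqrt_mul_self])

end Matrix.PosSemidef

/-- If `σ` is a density matrix and `0 ≤ A ≤ 1` with `Tr(Aσ) = 1`,
then `√A σ √A = σ`. -/
theorem measurement_no_disturbance {n : ℕ} (σ A : Matrix (Fin n) (Fin n) ℂ)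
    (hσ : σ.PosSemidef) (hσtr : σ.trace = 1)
    (hA : A.PosSemidef) (hA1 : ((1 : Matrix (Fin n) (Fin n) ℂ) - A).PosSemidef)
    (htr : (A * σ).trace = 1) :
    hA.sqrt * σ * hA.sqrt = σ := by
  have hfix : A * σ = σ := by
    have := hA1.mul_eq_zero_of_trace_mul_eq_zero hσ <| by
      rw [sub_mul, one_mul, trace_sub, hσtr, htr, sub_self]
    rwa [sub_mul, one_mul, sub_eq_zero, eq_comm] at this
  have hleft : hA.sqrt * σ = σ := hA.sqrt_mul_eq_self_of_mul_eq_self hfix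
  have hright : σ * hA.sqrt = σ := by
    simpa only [conjTranspose_mul, hA.posSemidef_sqrt.1.eq, hσ.1.eq] using
      congrArg conjTranspose hleft
  rw [hleft, hright]
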